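/- For any fixed digits c_1,…,c_n ∈ {0,1,…,s−1}, the cylinder Δ(c_1…c_n) equals the closed interval [Σ_{i=1}^n ε_i c_i/s^i − Σ_{k>n, k∈N_B} (s−1)/s^k, Σ_{i=1}^n ε_i c_i/s^i + Σ_{k>n, k∉N_B} (s−1)/s^k]. -/

import Mathlib

open scoped Classical BigOperators

/-- Sign of the `n`-th term: `-1` if `n ∈ N_B`, `+1` otherwise. -/
noncomputable def eps (B : Set ℕ+) (n : ℕ+) : ℝ := if n ∈ B then -1 else 1

/-- The quasi-nega-s value of a digit sequence `α`:
`S(α) = Σ_{n≥1} ε_n α_n / s^n`. -/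
noncomputable def qnsVal (s : ℕ) (B : Set ℕ+) (α : ℕ+ → ℕ) : ℝ :=
  ∑' n : ℕ+, eps B n * (α n : ℝ) / (s : ℝ) ^ (n : ℕ)


/-- The cylinder of rank `n` with base `c_1 … c_n`. -/
def cylinder (s : ℕ) (B : Set ℕ+) (n : ℕ+) (c : ℕ+ → ℕ) : Set ℝ :=
  {x | ∃ α : ℕ+ → ℕ, (∀ k, α k < s) ∧ (∀ i, i ≤ n → α i = c i) ∧ qnsVal s B α = x}

/-!
Past position `n` the digit `α k` contributes `ε_k α_k / s^k`. Replacing `α k` by `s - 1 - α k`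
for `k ∈ N_B`, a bijection of digit sequences, turns this tail into the ordinary base-`s` expansion
of the new digits minus the constant `Σ_{k>n, k∈N_B} (s-1)/s^k`. Ordinary expansions of the tail
fill exactly `[0, s^{-n}]`, and `s^{-n} = Σ_{k>n} (s-1)/s^k` splits into the two sums of the
statement.
-/

section PNatTail

variable {M : Type*} [AddCommMonoid M] [TopologicalSpace M]

lemma tsum_compl_Icc_one_eq_tsum_nat (f : ℕ+ → M) (n : ℕ+) :
    ∑' k : ↥((Finset.Icc 1 n : Set ℕ+)ᶜ), f k = ∑' j : ℕ, f (n + j.succPNat) := by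
  have mem : ∀ k : ℕ+, k ∈ (Finset.Icc 1 n : Set ℕ+)ᶜ ↔ n < k := fun k => by simp
  let e : ℕ → ↥((Finset.Icc 1 n : Set ℕ+)ᶜ) := fun j =>
    ⟨n + j.succPNat, (mem _).2 (PNat.lt_add_right n _)⟩
  have he : Function.Bijective e := by
    refine ⟨fun i j hij => ?_, fun ⟨k, hk⟩ => ?_⟩
    · have := congrArg (fun k => (k.1 : ℕ)) hij
      simp only [e, PNat.add_coe, Nat.succPNat_coe] at this
      omega
    · have hnk : (n : ℕ) < k := (mem k).1 hk
      refine ⟨(k : ℕ) - n - 1, Subtype.ext (PNat.eq ?_)⟩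
      simp only [e, PNat.add_coe, Nat.succPNat_coe]
      omega
  exact ((Equiv.ofBijective e he).tsum_eq (fun k => f k)).symm

lemma tsum_ite_lt_eq_tsum_nat (f : ℕ+ → M) (n : ℕ+) :
    ∑' k : ℕ+, (if n < k then f k else 0) = ∑' j : ℕ, f (n + j.succPNat) := by
  rw [← tsum_compl_Icc_one_eq_tsum_nat, tsum_subtype]
  congr 1
  ext k
  simp [Set.indicator_apply]

end PNatTail

lemma Summable.tsum_pnat_eq_sum_Icc_add_tsum_nat {G : Type*} [AddCommGroup G]
    [TopologicalSpace G] [IsTopologicalAddGroup G] [T2Space G] {f : ℕ+ → G} (hf : Summable f)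
    (n : ℕ+) :
    ∑' k, f k = ∑ i ∈ Finset.Icc 1 n, f i + ∑' j : ℕ, f (n + j.succPNat) := by
  rw [← tsum_compl_Icc_one_eq_tsum_nat, hf.sum_add_tsum_compl]

lemma Real.range_ofDigits {b : ℕ} (hb : 1 < b) :
    Set.range (Real.ofDigits (b := b)) = Set.Icc 0 1 :=
  (Set.range_subset_iff.2 fun d =>
    Set.mem_Icc.2 ⟨Real.ofDigits_nonneg d, Real.ofDigits_le_one d⟩).antisymm
    (Set.image_univ ▸ Real.ofDigits_SurjOn hb)

section SignedDigits

variable {b : ℕ}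

noncomputable def flipDigitsOn (S : Set ℕ) (a : ℕ → Fin b) : ℕ → Fin b :=
  fun j => if j ∈ S then (a j).rev else a j

lemma flipDigitsOn_involutive (S : Set ℕ) : Function.Involutive (flipDigitsOn (b := b) S) := by
  intro a
  funext j
  by_cases hj : j ∈ S <;> simp [flipDigitsOn, hj]

lemma sign_mul_digit_eq_flipDigitsOn_sub (S : Set ℕ) (a : ℕ → Fin b) (j : ℕ) :
    (if j ∈ S then -1 else 1) * (a j : ℝ) =
      (flipDigitsOn S a j : ℝ) - if j ∈ S then (b : ℝ) - 1 else 0 := by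
  by_cases hj : j ∈ S
  · have : (a j : ℕ) + 1 ≤ b := (a j).isLt
    simp only [flipDigitsOn, hj, if_true, Fin.val_rev]
    rw [Nat.cast_sub this]
    push_cast
    ring
  · simp [flipDigitsOn, hj]

lemma hasSum_div_pow_add (d : ℕ → Fin b) (m : ℕ) :
    HasSum (fun j => (d j : ℝ) / (b : ℝ) ^ (m + (j + 1))) (((b : ℝ) ^ m)⁻¹ * Real.ofDigits d) := by
  have hterm : (fun j => (d j : ℝ) / (b : ℝ) ^ (m + (j + 1))) =
      fun j => ((b : ℝ) ^ m)⁻¹ * Real.ofDigitsTerm d j := by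
    funext j
    rw [Real.ofDigitsTerm, pow_add, div_mul_eq_div_div_swap]
    ring
  rw [hterm, Real.ofDigits]
  exact Real.summable_ofDigitsTerm.hasSum.mul_left _

lemma hasSum_sub_one_div_pow_add (hb : 1 < b) (m : ℕ) :
    HasSum (fun j : ℕ => ((b : ℝ) - 1) / (b : ℝ) ^ (m + (j + 1))) ((b : ℝ) ^ m)⁻¹ := by
  have top : ((⟨b - 1, Nat.sub_one_lt_of_lt hb⟩ : Fin b) : ℝ) = (b : ℝ) - 1 := by
    simp [Nat.cast_sub hb.le]
  simpa [top, Real.ofDigits_const_last_eq_one' hb] using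
    hasSum_div_pow_add (fun _ => (⟨b - 1, Nat.sub_one_lt_of_lt hb⟩ : Fin b)) m

lemma tsum_sign_mul_digit_div_pow_add (hb : 1 < b) (S : Set ℕ) (m : ℕ) (a : ℕ → Fin b) :
    ∑' j, (if j ∈ S then -1 else 1) * (a j : ℝ) / (b : ℝ) ^ (m + (j + 1)) =
      ((b : ℝ) ^ m)⁻¹ * Real.ofDigits (flipDigitsOn S a) -
        ∑' j, if j ∈ S then ((b : ℝ) - 1) / (b : ℝ) ^ (m + (j + 1)) else 0 := by
  have hL : Summable fun j => if j ∈ S then ((b : ℝ) - 1) / (b : ℝ) ^ (m + (j + 1)) else 0 :=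
    (hasSum_sub_one_div_pow_add hb m).summable.indicator S
  rw [← (hasSum_div_pow_add (flipDigitsOn S a) m).tsum_eq,
    ← (hasSum_div_pow_add _ m).summable.tsum_sub hL]
  congr 1
  funext j
  rw [sign_mul_digit_eq_flipDigitsOn_sub, sub_div]
  split_ifs <;> simp

theorem range_tsum_sign_mul_digit_div_pow_add (hb : 1 < b) (S : Set ℕ) (m : ℕ) :
    Set.range (fun a : ℕ → Fin b =>
        ∑' j, (if j ∈ S then -1 else 1) * (a j : ℝ) / (b : ℝ) ^ (m + (j + 1))) =
      Set.Icc (-∑' j, if j ∈ S then ((b : ℝ) - 1) / (b : ℝ) ^ (m + (j + 1)) else 0)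
        (∑' j, if j ∉ S then ((b : ℝ) - 1) / (b : ℝ) ^ (m + (j + 1)) else 0) := by
  set w : ℕ → ℝ := fun j => ((b : ℝ) - 1) / (b : ℝ) ^ (m + (j + 1))
  set L := ∑' j, if j ∈ S then w j else 0
  set U := ∑' j, if j ∉ S then w j else 0
  have hw : HasSum w ((b : ℝ) ^ m)⁻¹ := hasSum_sub_one_div_pow_add hb m
  have hL : Summable fun j => if j ∈ S then w j else 0 := hw.summable.indicator S
  have hU : Summable fun j => if j ∉ S then w j else 0 :=
    (hw.summable.indicator Sᶜ).congr fun j => by simp [Set.indicator_apply]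
  have hLU : L + U = ((b : ℝ) ^ m)⁻¹ := by
    rw [← hL.tsum_add hU, ← hw.tsum_eq]
    congr 1
    funext j
    by_cases hj : j ∈ S <;> simp [hj]
  simp_rw [tsum_sign_mul_digit_div_pow_add hb S m, sub_eq_add_neg]
  change Set.range ((((b : ℝ) ^ m)⁻¹ * · + -L) ∘ Real.ofDigits ∘ flipDigitsOn S) = _
  rw [Set.range_comp, (flipDigitsOn_involutive S).surjective.range_comp, Real.range_ofDigits hb,
    Set.image_affine_Icc' (by positivity)]
  congr 1 <;> linarith

end SignedDigits

lemma summable_qnsVal_summand {s : ℕ} (B : Set ℕ+) {α : ℕ+ → ℕ} (hα : ∀ k, α k < s) :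
    Summable fun k : ℕ+ => eps B k * (α k : ℝ) / (s : ℝ) ^ (k : ℕ) := by
  have hdigits : Summable fun k : ℕ+ => (α k : ℝ) / (s : ℝ) ^ (k : ℕ) := by
    rw [← Equiv.pnatEquivNat.symm.summable_iff]
    simpa [Function.comp_def] using
      (hasSum_div_pow_add (fun j => (⟨α j.succPNat, hα _⟩ : Fin s)) 0).summable
  refine hdigits.of_norm_bounded fun k => ?_
  rw [Real.norm_eq_abs, abs_div, abs_mul, abs_of_nonneg (by positivity : (0 : ℝ) ≤ s ^ (k : ℕ))]
  unfold eps
  split_ifs <;> simp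

lemma mem_cylinder_iff {s : ℕ} {B : Set ℕ+} {n : ℕ+} {c : ℕ+ → ℕ} (hc : ∀ i, i ≤ n → c i < s)
    (x : ℝ) :
    x ∈ cylinder s B n c ↔
      x - ∑ i ∈ Finset.Icc 1 n, eps B i * (c i : ℝ) / (s : ℝ) ^ (i : ℕ) ∈
        Set.range fun a : ℕ → Fin s => ∑' j,
          (if j ∈ {j : ℕ | n + j.succPNat ∈ B} then -1 else 1) * (a j : ℝ) /
            (s : ℝ) ^ ((n : ℕ) + (j + 1)) := by
  constructor
  · rintro ⟨α, hα, hαc, rfl⟩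
    refine ⟨fun j => ⟨α (n + j.succPNat), hα _⟩, ?_⟩
    rw [qnsVal, (summable_qnsVal_summand B hα).tsum_pnat_eq_sum_Icc_add_tsum_nat n,
      Finset.sum_congr rfl fun i hi => by rw [hαc i (Finset.mem_Icc.1 hi).2], add_sub_cancel_left]
    rfl
  · rintro ⟨a, ha⟩
    let α : ℕ+ → ℕ := fun k => if k ≤ n then c k else a ((k : ℕ) - n - 1)
    have hα : ∀ k, α k < s := by
      intro k
      by_cases hk : k ≤ n
      · simpa [α, hk] using hc k hk
      · simp [α, hk]
    have hαc : ∀ i, i ≤ n → α i = c i := fun i hi => if_pos hi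
    have hαa : ∀ j : ℕ, α (n + j.succPNat) = a j := by
      intro j
      have hj : ¬ n + j.succPNat ≤ n := not_le.2 (PNat.lt_add_right n _)
      simp [α, hj, PNat.add_coe]
    refine ⟨α, hα, hαc, ?_⟩
    rw [qnsVal, (summable_qnsVal_summand B hα).tsum_pnat_eq_sum_Icc_add_tsum_nat n,
      Finset.sum_congr rfl fun i hi => by rw [hαc i (Finset.mem_Icc.1 hi).2],
      ← eq_sub_iff_add_eq'.1 ha]
    simp only [hαa]
    rfl

theorem cylinder_eq_Icc (s : ℕ) (hs : 2 ≤ s) (B : Set ℕ+) (n : ℕ+) (c : ℕ+ → ℕ)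
    (hc : ∀ i, i ≤ n → c i < s) :
    cylinder s B n c =
      Set.Icc
        ((∑ i ∈ Finset.Icc 1 n, eps B i * (c i : ℝ) / (s : ℝ) ^ (i : ℕ)) -
          ∑' k : ℕ+, (if n < k ∧ k ∈ B then ((s : ℝ) - 1) / (s : ℝ) ^ (k : ℕ) else 0))
        ((∑ i ∈ Finset.Icc 1 n, eps B i * (c i : ℝ) / (s : ℝ) ^ (i : ℕ)) +
          ∑' k : ℕ+, (if n < k ∧ k ∉ B then ((s : ℝ) - 1) / (s : ℝ) ^ (k : ℕ) else 0)) := by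
  ext x
  rw [mem_cylinder_iff hc, range_tsum_sign_mul_digit_div_pow_add (by omega : 1 < s)]
  simp only [ite_and, tsum_ite_lt_eq_tsum_nat, PNat.add_coe, Nat.succPNat_coe, Nat.succ_eq_add_one,
    Set.mem_Icc, Set.mem_ofPred_eq]
  constructor <;> rintro ⟨h1, h2⟩ <;> constructor <;> linarith
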